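/- Let m ≥ 1 and let F be a finite set of strings over the alphabet Fin m, each of length at least 2; for each j ≥ 2 let a_j be the number of elements of F of length j, and for each n let s_n be the number of strings of length n over Fin m that avoid F. Let A be the formal power series 1 − m·X + ∑_{j≥2} a_j·X^j over ℝ, and let g_n be the n-th coefficient of the inverse power series A⁻¹. If g_n > 0 for every n, then s_n ≥ g_n for every n. -/

import Mathlib

/-!
Let `S = ∑ sₙ Xⁿ` count the words avoiding `F`. Appending a letter to an avoiding word of
length `n` gives either an avoiding word of length `n + 1` or a word `u ++ f` with `f ∈ F` a
suffix and `u` avoiding, and this map is injective; hence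
`m sₙ ≤ sₙ₊₁ + ∑_{f ∈ F, |f| ≤ n+1} sₙ₊₁₋|f|`, i.e. `A * S` has nonnegative coefficients, and its
constant coefficient is `s₀ = 1`. Then `S = A⁻¹ * (A * S)` dominates `A⁻¹ * 1` coefficientwise,
because `A⁻¹` has nonnegative coefficients.
-/

open Finset PowerSeries

theorem PowerSeries.coeff_mul_coeff_zero_le {R : Type*} [Semiring R] [PartialOrder R]
    [IsOrderedRing R] {P Q : R⟦X⟧} (hP : ∀ i, 0 ≤ coeff i P) (hQ : ∀ i, 0 ≤ coeff i Q) (n : ℕ) :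
    coeff n P * coeff 0 Q ≤ coeff n (P * Q) := by
  rw [coeff_mul]
  exact single_le_sum (f := fun p : ℕ × ℕ => coeff p.1 P * coeff p.2 Q)
    (fun p _ => mul_nonneg (hP _) (hQ _)) (by simp : (n, 0) ∈ antidiagonal n)

section Avoidance

variable {α : Type*}

def Avoids (F : Finset (List α)) (w : List α) : Prop :=
  ∀ f ∈ F, ¬ f <:+: w

instance [DecidableEq α] (F : Finset (List α)) : DecidablePred (Avoids F) :=
  fun w => inferInstanceAs (Decidable (∀ f ∈ F, ¬ f <:+: w))

theorem Avoids.of_infix {F : Finset (List α)} {u w : List α} (hw : Avoids F w)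
    (huw : u <:+: w) : Avoids F u :=
  fun f hf hfu => hw f hf (hfu.trans huw)

theorem Avoids.append_singleton {F : Finset (List α)} {w : List α} (hw : Avoids F w) (a : α) :
    Avoids F (w ++ [a]) ∨ ∃ f ∈ F, ∃ u, Avoids F u ∧ u ++ f = w ++ [a] := by
  by_cases h : Avoids F (w ++ [a])
  · exact .inl h
  right
  obtain ⟨f, hfF, hfw⟩ : ∃ f ∈ F, f <:+: w ++ [a] := by simpa [Avoids] using h
  obtain ⟨u, hu⟩ := (List.infix_concat_iff.1 hfw).resolve_right (hw f hfF)
  have hf : f ≠ [] := by rintro rfl; exact hw [] hfF List.nil_infix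
  have huw : u <+: w := List.prefix_of_prefix_length_le ⟨f, hu⟩ ⟨[a], rfl⟩ (by
    have := congrArg List.length hu
    have := List.length_pos_iff.2 hf
    simp at *; omega)
  exact ⟨f, hfF, u, hw.of_infix huw.isInfix, hu⟩

variable [Fintype α] [DecidableEq α]

def avoiding (F : Finset (List α)) (n : ℕ) : Finset (List α) :=
  ((univ : Finset (List.Vector α n)).map ⟨List.Vector.toList, List.Vector.toList_injective⟩).filter
    (Avoids F)

theorem mem_avoiding {F : Finset (List α)} {n : ℕ} {w : List α} :
    w ∈ avoiding F n ↔ w.length = n ∧ Avoids F w := by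
  simp only [avoiding, mem_filter, mem_map, mem_univ, true_and, Function.Embedding.coeFn_mk]
  exact and_congr_left' ⟨fun ⟨v, hv⟩ => hv ▸ v.toList_length, fun h => ⟨⟨w, h⟩, rfl⟩⟩

theorem avoiding_zero {F : Finset (List α)} (hF : [] ∉ F) : avoiding F 0 = {[]} := by
  ext w
  simp only [mem_avoiding, List.length_eq_zero_iff, mem_singleton, and_iff_left_iff_imp]
  rintro rfl f hf hfw
  exact hF (List.eq_nil_of_infix_nil hfw ▸ hf)

theorem card_mul_card_avoiding_le (F : Finset (List α)) (n : ℕ) :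
    Fintype.card α * #(avoiding F n) ≤ #(avoiding F (n + 1)) +
      ∑ f ∈ F with f.length ≤ n + 1, #(avoiding F (n + 1 - f.length)) := by
  have hsub : (univ ×ˢ avoiding F n).image (fun p : α × List α => p.2 ++ [p.1]) ⊆
      avoiding F (n + 1) ∪ {f ∈ F | f.length ≤ n + 1}.biUnion
        (fun f => (avoiding F (n + 1 - f.length)).image (· ++ f)) := by
    simp only [subset_iff, mem_image, mem_product, mem_univ, true_and, Prod.exists]
    rintro _ ⟨a, w, hw, rfl⟩
    rw [mem_avoiding] at hw
    rcases hw.2.append_singleton a with h | ⟨f, hfF, u, hu, hufw⟩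
    · exact mem_union_left _ (mem_avoiding.2 ⟨by simp [hw.1], h⟩)
    · have hlen := congrArg List.length hufw
      simp only [List.length_append, List.length_singleton, hw.1] at hlen
      refine mem_union_right _ (mem_biUnion.2 ⟨f, mem_filter.2 ⟨hfF, by omega⟩, ?_⟩)
      exact mem_image.2 ⟨u, mem_avoiding.2 ⟨by omega, hu⟩, hufw⟩
  have hinj : Function.Injective (fun p : α × List α => p.2 ++ [p.1]) := by
    rintro ⟨a, w⟩ ⟨b, v⟩ h
    obtain ⟨rfl, hab⟩ := List.append_inj' h rfl
    simp_all
  calc Fintype.card α * #(avoiding F n)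
      = #((univ ×ˢ avoiding F n).image (fun p : α × List α => p.2 ++ [p.1])) := by
        rw [card_image_of_injective _ hinj, card_product, card_univ]
    _ ≤ #(avoiding F (n + 1)) + #({f ∈ F | f.length ≤ n + 1}.biUnion
          (fun f => (avoiding F (n + 1 - f.length)).image (· ++ f))) :=
        (card_le_card hsub).trans (card_union_le _ _)
    _ ≤ _ := by
        gcongr
        exact card_biUnion_le.trans (sum_le_sum fun f _ => card_image_le)

theorem card_avoiding (F : Finset (List α)) (n : ℕ) :
    Nat.card {w : List α // w.length = n ∧ Avoids F w} = #(avoiding F n) := by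
  rw [← Nat.card_eq_finsetCard]
  exact Nat.card_congr (Equiv.subtypeEquivRight fun w => mem_avoiding.symm)

noncomputable def avoidingSeries (F : Finset (List α)) : ℝ⟦X⟧ :=
  mk fun n => (#(avoiding F n) : ℝ)

theorem coeff_mul_avoidingSeries_nonneg (F : Finset (List α)) (n : ℕ) :
    0 ≤ coeff n
      ((1 - C (Fintype.card α : ℝ) * X + ∑ f ∈ F, X ^ f.length) * avoidingSeries F) := by
  have hforb : ∀ k, coeff k ((∑ f ∈ F, X ^ f.length) * avoidingSeries F) =
      ∑ f ∈ F with f.length ≤ k, coeff (k - f.length) (avoidingSeries F) := by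
    intro k
    simp only [sum_mul, map_sum, coeff_X_pow_mul', sum_filter]
  rw [add_mul, sub_mul, one_mul, map_add, map_sub, hforb, mul_assoc, coeff_C_mul]
  rcases n with _ | n
  · simp only [coeff_zero_X_mul, mul_zero, sub_zero, avoidingSeries, coeff_mk]
    positivity
  · have key := (Nat.cast_le (α := ℝ)).2 (card_mul_card_avoiding_le F n)
    push_cast at key
    simp only [coeff_succ_X_mul, avoidingSeries, coeff_mk]
    linarith

end Avoidance

theorem avoiding_count_ge_inv_coeff_general (m : ℕ)
    (F : Finset (List (Fin m))) (hF : ∀ w ∈ F, 2 ≤ w.length)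
    (A : PowerSeries ℝ)
    (hA : A = PowerSeries.mk (fun j => if j = 0 then 1 else if j = 1 then -(m : ℝ)
        else ((F.filter (fun w => w.length = j)).card : ℝ)))
    (hpos : ∀ n : ℕ, 0 < PowerSeries.coeff n A⁻¹) :
    ∀ n : ℕ, PowerSeries.coeff n A⁻¹
      ≤ (Nat.card {w : List (Fin m) // w.length = n ∧ ∀ f ∈ F, ¬ f <:+: w} : ℝ) := by
  intro n
  have hA' : A = 1 - C (Fintype.card (Fin m) : ℝ) * X + ∑ f ∈ F, X ^ f.length := by
    ext j
    simp only [hA, coeff_mk, map_add, map_sub, coeff_one, coeff_C_mul, coeff_X, map_sum,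
      coeff_X_pow, sum_boole, Fintype.card_fin]
    have hshort : ∀ j < 2, {f ∈ F | j = f.length} = ∅ := fun j hj =>
      filter_eq_empty_iff.2 fun f hf hfj => by have := hF f hf; omega
    rcases j with _ | _ | j
    · rw [hshort _ (by norm_num)]; simp
    · rw [hshort _ (by norm_num)]; simp
    · simp [eq_comm]
  have hA0 : constantCoeff A ≠ 0 := by simp [hA]
  have hAS0 : coeff 0 (A * avoidingSeries F) = 1 := by
    simp [hA, avoidingSeries, avoiding_zero (fun h => by simpa using hF [] h)]
  calc coeff n A⁻¹ = coeff n A⁻¹ * coeff 0 (A * avoidingSeries F) := by rw [hAS0, mul_one]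
    _ ≤ coeff n (A⁻¹ * (A * avoidingSeries F)) :=
        coeff_mul_coeff_zero_le (fun i => (hpos i).le)
          (hA' ▸ coeff_mul_avoidingSeries_nonneg F) n
    _ = coeff n (avoidingSeries F) := by
        rw [← mul_assoc, PowerSeries.inv_mul_cancel _ hA0, one_mul]
    _ = _ := by rw [avoidingSeries, coeff_mk, ← card_avoiding]; rfl

/-- Let `F` be a finite set of forbidden strings over `Fin m` (each of length ≥ 2),
`a_j` the number of forbidden strings of length `j`, `s_n` the number of strings of
length `n` avoiding `F`, and `A = 1 − m·X + ∑_{j≥2} a_j·X^j ∈ ℝ⟦X⟧` with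
`g_n = coeff n A⁻¹`.  If `g_n > 0` for all `n`, then `s_n ≥ g_n` for all `n`. -/
theorem avoiding_count_ge_inv_coeff (m : ℕ) (hm : 1 ≤ m)
    (F : Finset (List (Fin m))) (hF : ∀ w ∈ F, 2 ≤ w.length)
    (A : PowerSeries ℝ)
    (hA : A = PowerSeries.mk (fun j => if j = 0 then 1 else if j = 1 then -(m : ℝ)
        else ((F.filter (fun w => w.length = j)).card : ℝ)))
    (hpos : ∀ n : ℕ, 0 < PowerSeries.coeff n A⁻¹) :
    ∀ n : ℕ, PowerSeries.coeff n A⁻¹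
      ≤ (Nat.card {w : List (Fin m) // w.length = n ∧ ∀ f ∈ F, ¬ f <:+: w} : ℝ) :=
  avoiding_count_ge_inv_coeff_general m F hF A hA hpos
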